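/- Let M be a differentiable curve in ℝⁿ parameterized by a diffeomorphism f : I → ℝⁿ with f₁(x) = x and sup_{x∈I}|f'(x)|_∞ < ∞, and let μ be the induced measure on M. Assume M is extremal, i.e. for every ε > 0 the set S_n(ε) ∩ M := {y ∈ M : ‖qy‖ < |q|^{-1/n-ε} for infinitely many q ∈ ℤ \ {0}} has μ-measure zero. Then for every θ ∈ ℝⁿ and every ε > 0, the set S_n^θ(ε) ∩ M := {y ∈ M : ‖qy + θ‖ < |q|^{-1/n-ε} for infinitely many q ∈ ℤ \ {0}} has μ-measure zero. -/

import Mathlib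

open Real MeasureTheory Filter Set

/-- Distance from a real number to the nearest integer. -/
noncomputable def dnint (t : ℝ) : ℝ := |t - round t|

/-- `‖y‖`: max over coordinates of the distance to the nearest integer. -/
noncomputable def vnorm {n : ℕ} (y : Fin n → ℝ) : ℝ := ⨆ i, dnint (y i)

/-- Supremum norm of an integer vector, as a real number. -/
noncomputable def isupnorm {n : ℕ} (q : Fin n → ℤ) : ℝ := ⨆ i, |(q i : ℝ)|

/-- The simultaneous Diophantine exponent
`w₀(x) = sup {w : ‖q x‖ < q^{-w} for infinitely many q ∈ ℕ}`. -/
noncomputable def wsim (n : ℕ) (x : Fin n → ℝ) : EReal :=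
  sSup {w : EReal | ∃ v : ℝ, w = (v : EReal) ∧
    {q : ℕ | 0 < q ∧ vnorm (fun i => (q : ℝ) * x i) < (q : ℝ) ^ (-v)}.Infinite}

/-- The dual Diophantine exponent
`w_{n-1}(x) = sup {w : ‖q.x‖ < |q|^{-w} for infinitely many q ∈ ℤⁿ \ {0}}`. -/
noncomputable def wdual (n : ℕ) (x : Fin n → ℝ) : EReal :=
  sSup {w : EReal | ∃ v : ℝ, w = (v : EReal) ∧
    {q : Fin n → ℤ | q ≠ 0 ∧
      dnint (∑ i, (q i : ℝ) * x i) < isupnorm q ^ (-v)}.Infinite}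

open scoped NNReal ENNReal Topology

/-!
Sort the points `x` by the homogeneous behaviour of `f x`. If some `d f(x)` is an integer
vector, `x = f₁(x)` is rational. If no `κ > 0` gives `‖d f(x)‖ ≥ κ |d|^(-1/n-ε/2)` for all `d ≠ 0`,
then (up to the rational case) infinitely many `d` beat `|d|^(-1/n-ε/2)`, a null set by
extremality. The remaining points are `κ`-badly approximable for some `κ = 1/(j+1)`.

Around such a point, two distinct `q, q'` of size in `[2^t, 2^(t+1))` cannot both approximate
`-θ` at points closer than `ρ_t ≈ κ 2^(-t(1+1/n+ε/2))`: `q - q'` would then approximate `0` too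
well at `f x`. So on each window of length `ρ_t` a single `q` is active, and `f₁(x) = x` confines
the window's bad points to an interval of length `2 · 2^(-t(1/n+ε)) / |q|`. Summing over the
`(b-a)/ρ_t` windows bounds the measure at level `t` by `O(2^(-tε/2))`, and Borel–Cantelli
concludes.
-/

lemma dnint_sub_le (s t : ℝ) : dnint (s - t) ≤ dnint s + dnint t :=
  calc dnint (s - t) ≤ |s - t - ((round s - round t : ℤ) : ℝ)| := round_le _ _
    _ = |(s - round s) - (t - round t)| := by push_cast; ring_nf
    _ ≤ dnint s + dnint t := abs_sub _ _

lemma dnint_add_le_abs (s t : ℝ) : dnint (s + t) ≤ dnint s + |t| :=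
  calc dnint (s + t) ≤ |s + t - round s| := round_le _ _
    _ = |(s - round s) + t| := by ring_nf
    _ ≤ dnint s + |t| := abs_add_le _ _

lemma exists_intCast_eq_of_dnint_eq_zero {t : ℝ} (h : dnint t = 0) : ∃ m : ℤ, t = m :=
  ⟨round t, by linarith [abs_eq_zero.mp h]⟩

lemma round_eq_round_of_abs_sub_lt {s t : ℝ} (h : dnint s + dnint t + |s - t| < 1) :
    round s = round t := by
  have key : |((round s - round t : ℤ) : ℝ)| < 1 :=
    calc |((round s - round t : ℤ) : ℝ)| = |-(s - round s) + (t - round t) + (s - t)| := by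
          push_cast; ring_nf
      _ ≤ dnint s + dnint t + |s - t| := by
          unfold dnint; linarith [abs_add_le (-(s - round s) + (t - round t)) (s - t),
            abs_add_le (-(s - round s)) (t - round t), abs_neg (s - round s)]
      _ < 1 := h
  have : |round s - round t| < 1 := by exact_mod_cast key
  rw [abs_lt] at this
  omega

lemma vnorm_nonneg {n : ℕ} (y : Fin n → ℝ) : 0 ≤ vnorm y :=
  Real.iSup_nonneg fun _ => abs_nonneg _

lemma dnint_le_vnorm {n : ℕ} (y : Fin n → ℝ) (i : Fin n) : dnint (y i) ≤ vnorm y :=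
  le_ciSup (f := fun i => dnint (y i)) (Set.finite_range _).bddAbove i

lemma vnorm_le {n : ℕ} {y : Fin n → ℝ} {c : ℝ} (hc : 0 ≤ c) (h : ∀ i, dnint (y i) ≤ c) :
    vnorm y ≤ c :=
  Real.iSup_le h hc

lemma vnorm_sub_le {n : ℕ} (y z : Fin n → ℝ) : vnorm (y - z) ≤ vnorm y + vnorm z :=
  vnorm_le (add_nonneg (vnorm_nonneg y) (vnorm_nonneg z)) fun i =>
    (dnint_sub_le _ _).trans (add_le_add (dnint_le_vnorm y i) (dnint_le_vnorm z i))

lemma vnorm_add_le_norm {n : ℕ} (y z : Fin n → ℝ) : vnorm (y + z) ≤ vnorm y + ‖z‖ :=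
  vnorm_le (add_nonneg (vnorm_nonneg y) (norm_nonneg z)) fun i =>
    (dnint_add_le_abs _ _).trans (add_le_add (dnint_le_vnorm y i) (norm_le_pi_norm z i))

lemma volume_dnint_lt_inter_Icc_le {q : ℤ} (hq : q ≠ 0) {c w ρ δ : ℝ}
    (h : 2 * δ + |(q : ℝ)| * ρ ≤ 1) :
    volume {x ∈ Icc w (w + ρ) | dnint (q * x + c) < δ} ≤ ENNReal.ofReal (2 * δ / |(q : ℝ)|) := by
  obtain he | ⟨x₀, hx₀, hx₀δ⟩ :=
    Set.eq_empty_or_nonempty {x ∈ Icc w (w + ρ) | dnint (q * x + c) < δ}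
  · rw [he]; simp
  have hq' : (q : ℝ) ≠ 0 := Int.cast_ne_zero.2 hq
  set m := round (q * x₀ + c)
  calc volume {x ∈ Icc w (w + ρ) | dnint (q * x + c) < δ}
      ≤ volume (Metric.ball ((m - c) / q) (δ / |(q : ℝ)|)) := by
        refine measure_mono fun x ⟨hx, hxδ⟩ => ?_
        have hdist : |(q * x + c) - (q * x₀ + c)| ≤ |(q : ℝ)| * ρ := by
          rw [show (q : ℝ) * x + c - (q * x₀ + c) = q * (x - x₀) by ring, abs_mul]
          gcongr
          rw [abs_le]
          constructor <;> linarith [hx.1, hx.2, hx₀.1, hx₀.2]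
        have hround : round (q * x + c) = m := round_eq_round_of_abs_sub_lt (by linarith)
        rw [Metric.mem_ball, Real.dist_eq,
          show x - (m - c) / q = (q * x + c - round (q * x + c)) / q by
            rw [hround]; field_simp; ring, abs_div]
        exact div_lt_div_of_pos_right hxδ (abs_pos.2 hq')
    _ = ENNReal.ofReal (2 * δ / |(q : ℝ)|) := by rw [Real.volume_ball, mul_div_assoc]

lemma volume_le_of_volume_inter_Icc_le {s : Set ℝ} {a b ρ : ℝ} {m : ℝ≥0∞} (hs : s ⊆ Icc a b)
    (hρ : 0 < ρ) (h : ∀ w, volume (s ∩ Icc w (w + ρ)) ≤ m) :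
    volume s ≤ ENNReal.ofReal ((b - a) / ρ + 1) * m := by
  obtain rfl | ⟨x₀, hx₀⟩ := s.eq_empty_or_nonempty
  · simp
  have hab : 0 ≤ (b - a) / ρ := div_nonneg (by linarith [(hs hx₀).1, (hs hx₀).2]) hρ.le
  set N := ⌊(b - a) / ρ⌋₊ + 1
  have hcover : s ⊆ ⋃ k ∈ Finset.range N, s ∩ Icc (a + k * ρ) (a + k * ρ + ρ) := by
    intro x hx
    obtain ⟨hax, hxb⟩ := hs hx
    have hk := Nat.floor_le (div_nonneg (sub_nonneg.2 hax) hρ.le)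
    have hk' := Nat.lt_floor_add_one ((x - a) / ρ)
    rw [le_div_iff₀ hρ] at hk
    rw [div_lt_iff₀ hρ] at hk'
    refine mem_iUnion₂.2 ⟨⌊(x - a) / ρ⌋₊, Finset.mem_range.2 ?_, hx, by linarith, by linarith⟩
    have := Nat.floor_le_floor (R := ℝ) (div_le_div_of_nonneg_right (sub_le_sub_right hxb a) hρ.le)
    omega
  calc volume s ≤ ∑ k ∈ Finset.range N, volume (s ∩ Icc (a + k * ρ) (a + k * ρ + ρ)) :=
        (measure_mono hcover).trans (measure_biUnion_finset_le _ _)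
    _ ≤ ∑ _k ∈ Finset.range N, m := Finset.sum_le_sum fun k _ => h (a + k * ρ)
    _ = N * m := by rw [Finset.sum_const, Finset.card_range, nsmul_eq_mul]
    _ ≤ ENNReal.ofReal ((b - a) / ρ + 1) * m := by
        gcongr
        rw [← ENNReal.ofReal_natCast]
        exact ENNReal.ofReal_le_ofReal (by push_cast [N]; linarith [Nat.floor_le hab])

lemma lipschitzOnWith_of_iSup_abs_deriv_le {ι : Type*} [Fintype ι] {f f' : ℝ → ι → ℝ}
    {s : Set ℝ} {C : ℝ} (hs : Convex ℝ s) (hf : ∀ x ∈ s, HasDerivAt f (f' x) x)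
    (hC : ∀ x ∈ s, (⨆ i, |f' x i|) ≤ C) : LipschitzOnWith C.toNNReal f s :=
  hs.lipschitzOnWith_of_nnnorm_hasDerivWithin_le (fun x hx => (hf x hx).hasDerivWithinAt)
    fun x hx => pi_nnnorm_le_iff.2 fun i => by
      rw [← NNReal.coe_le_coe, coe_nnnorm, Real.norm_eq_abs]
      exact (le_ciSup (f := fun i => |f' x i|) (Set.finite_range _).bddAbove i).trans
        ((hC x hx).trans (Real.le_coe_toNNReal C))

lemma Set.Infinite.frequently_exists_abs_mem_Ico_two_pow {S : Set ℤ} (hS : S.Infinite) :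
    ∃ᶠ t : ℕ in atTop, ∃ q ∈ S, |(q : ℝ)| ∈ Ico (2 ^ t) (2 * 2 ^ t) := by
  rw [frequently_atTop]
  intro t₀
  obtain ⟨q, hqS, hq⟩ := hS.exists_notMem_finset (Finset.Ioo (-2 ^ t₀) (2 ^ t₀))
  have habs : |(q : ℝ)| = q.natAbs := by rw [Nat.cast_natAbs, Int.cast_abs]
  have hq₀ : 2 ^ t₀ ≤ q.natAbs := by
    rw [Finset.mem_Ioo, ← abs_lt, ← Int.natCast_natAbs] at hq
    exact_mod_cast not_lt.1 hq
  refine ⟨Nat.log 2 q.natAbs, Nat.le_log_of_pow_le one_lt_two hq₀, q, hqS, ?_, ?_⟩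
  · rw [habs]
    exact_mod_cast Nat.pow_log_le_self 2 (Nat.one_le_iff_ne_zero.1 (Nat.one_le_two_pow.trans hq₀))
  · rw [habs, ← pow_succ']
    exact_mod_cast Nat.lt_pow_succ_log_self one_lt_two _

lemma measure_setOf_frequently_mem_eq_zero {α : Type*} [MeasurableSpace α] {μ : Measure α}
    {s : ℕ → Set α} {B : ℕ → ℝ} (hB : Summable B)
    (h : ∀ᶠ t in atTop, μ (s t) ≤ ENNReal.ofReal (B t)) : μ {x | ∃ᶠ t in atTop, x ∈ s t} = 0 := by
  obtain ⟨T, hT⟩ := eventually_atTop.1 h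
  have hset : {x | ∃ᶠ t in atTop, x ∈ s t} = {x | ∃ᶠ t in atTop, T ≤ t ∧ x ∈ s t} := by
    ext x
    exact ⟨(eventually_ge_atTop T).and_frequently, fun hx => hx.mono fun _ h => h.2⟩
  rw [hset]
  refine measure_setOfPred_frequently_eq_zero
    (ne_top_of_le_ne_top hB.tsum_ofReal_ne_top (ENNReal.tsum_le_tsum fun t => ?_))
  by_cases ht : T ≤ t
  · simpa [ht] using hT t ht
  · simp [ht]

section Shells

variable {n : ℕ} {f : ℝ → Fin n → ℝ} {θ : Fin n → ℝ} {a b : ℝ} {K : ℝ≥0}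

def approxSet (y θ : Fin n → ℝ) (e : ℝ) : Set ℤ :=
  {q | q ≠ 0 ∧ vnorm ((q : ℝ) • y + θ) < |(q : ℝ)| ^ e}

def IsBadlyApprox (κ e : ℝ) (y : Fin n → ℝ) : Prop :=
  ∀ d : ℤ, d ≠ 0 → κ * |(d : ℝ)| ^ e ≤ vnorm ((d : ℝ) • y)

lemma IsBadlyApprox.mono {κ κ' e : ℝ} {y : Fin n → ℝ} (h : IsBadlyApprox κ e y) (hκ : κ' ≤ κ) :
    IsBadlyApprox κ' e y :=
  fun d hd => (mul_le_mul_of_nonneg_right hκ (by positivity)).trans (h d hd)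

lemma exists_isBadlyApprox_of_finite {y : Fin n → ℝ} {e : ℝ} (hfin : (approxSet y 0 e).Finite)
    (hpos : ∀ d : ℤ, d ≠ 0 → 0 < vnorm ((d : ℝ) • y)) : ∃ κ > 0, IsBadlyApprox κ e y := by
  have hev : ∀ᶠ κ in 𝓝[>] (0 : ℝ),
      κ ≤ 1 ∧ ∀ d ∈ approxSet y 0 e, κ * |(d : ℝ)| ^ e ≤ vnorm ((d : ℝ) • y) := by
    refine ((eventually_le_nhds one_pos).filter_mono nhdsWithin_le_nhds).and
      (hfin.eventually_all.2 fun d hd => ?_)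
    have hlim : Tendsto (fun κ : ℝ => κ * |(d : ℝ)| ^ e) (𝓝[>] 0) (𝓝 0) := by
      simpa using ((tendsto_id (x := 𝓝 (0 : ℝ))).mul_const (|(d : ℝ)| ^ e)).mono_left
        nhdsWithin_le_nhds
    exact (hlim.eventually (gt_mem_nhds (hpos d hd.1))).mono fun _ h => h.le
  obtain ⟨κ, ⟨hκ1, hκ⟩, hκ0⟩ := (hev.and self_mem_nhdsWithin).exists
  refine ⟨κ, hκ0, fun d hd => ?_⟩
  by_cases hdS : d ∈ approxSet y 0 e
  · exact hκ d hdS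
  · have : |(d : ℝ)| ^ e ≤ vnorm ((d : ℝ) • y) := by simpa [approxSet, hd] using hdS
    exact (mul_le_of_le_one_left (by positivity) hκ1).trans this

/-- The paper's 'disjoint balls' at scale `P`. -/
def shellSet (f : ℝ → Fin n → ℝ) (θ : Fin n → ℝ) (a b P ψ γ : ℝ) : Set ℝ :=
  {x ∈ Icc a b | (∃ q : ℤ, |(q : ℝ)| ∈ Ico P (2 * P) ∧ vnorm ((q : ℝ) • f x + θ) < ψ) ∧
    ∀ d : ℤ, d ≠ 0 → |(d : ℝ)| < 4 * P → γ ≤ vnorm ((d : ℝ) • f x)}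

lemma eq_of_vnorm_lt_of_forall_le_vnorm {s : Set ℝ} (hf : LipschitzOnWith K f s)
    {P ψ γ ρ : ℝ} (hγ : 2 * ψ + 2 * P * K * ρ ≤ γ) {x y : ℝ} (hx : x ∈ s) (hy : y ∈ s)
    (hxy : |x - y| ≤ ρ) (hrep : ∀ d : ℤ, d ≠ 0 → |(d : ℝ)| < 4 * P → γ ≤ vnorm ((d : ℝ) • f x))
    {q q' : ℤ} (hq : |(q : ℝ)| < 2 * P) (hq' : |(q' : ℝ)| < 2 * P)
    (hxq : vnorm ((q : ℝ) • f x + θ) < ψ) (hyq' : vnorm ((q' : ℝ) • f y + θ) < ψ) : q = q' := by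
  by_contra hne
  have hd : |((q - q' : ℤ) : ℝ)| < 4 * P := by
    push_cast
    linarith [abs_sub (q : ℝ) q']
  have hshift : ‖(q' : ℝ) • (f x - f y)‖ ≤ 2 * P * K * ρ := by
    have hlip : ‖f x - f y‖ ≤ K * ρ := by
      rw [← dist_eq_norm]
      exact (hf.dist_le_mul x hx y hy).trans (by rw [Real.dist_eq]; gcongr)
    rw [norm_smul, Real.norm_eq_abs, mul_assoc]
    exact mul_le_mul hq'.le hlip (norm_nonneg _) (by linarith [abs_nonneg (q' : ℝ)])
  have := calc
    γ ≤ vnorm (((q - q' : ℤ) : ℝ) • f x) := hrep _ (sub_ne_zero.2 hne) hd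
    _ = vnorm (((q : ℝ) • f x + θ) - ((q' : ℝ) • f y + θ + (q' : ℝ) • (f x - f y))) := by
        congr 1
        push_cast
        module
    _ ≤ vnorm ((q : ℝ) • f x + θ) + (vnorm ((q' : ℝ) • f y + θ) + ‖(q' : ℝ) • (f x - f y)‖) :=
        (vnorm_sub_le _ _).trans (by gcongr; exact vnorm_add_le_norm _ _)
    _ < ψ + (ψ + 2 * P * K * ρ) := add_lt_add_of_lt_of_le hxq (add_le_add hyq'.le hshift)
  linarith

lemma volume_shellSet_inter_Icc_le (i₀ : Fin n) (hf : LipschitzOnWith K f (Icc a b))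
    (hf₀ : ∀ x ∈ Icc a b, f x i₀ = x) {P ψ γ ρ : ℝ} (hP : 0 < P)
    (hγ : 2 * ψ + 2 * P * K * ρ ≤ γ) (h1 : 2 * ψ + 2 * P * ρ ≤ 1) (hρ : 0 ≤ ρ) (w : ℝ) :
    volume (shellSet f θ a b P ψ γ ∩ Icc w (w + ρ)) ≤ ENNReal.ofReal (2 * ψ / P) := by
  obtain he | ⟨x₀, ⟨hx₀, ⟨q, hqP, hq⟩, hrep⟩, hx₀w⟩ :=
    (shellSet f θ a b P ψ γ ∩ Icc w (w + ρ)).eq_empty_or_nonempty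
  · rw [he]; simp
  have hq0 : q ≠ 0 := by rintro rfl; simp at hqP; linarith [hqP.1]
  have hψ : 0 ≤ ψ := (vnorm_nonneg _).trans hq.le
  calc volume (shellSet f θ a b P ψ γ ∩ Icc w (w + ρ))
      ≤ volume {x ∈ Icc w (w + ρ) | dnint (q * x + θ i₀) < ψ} := by
        refine measure_mono fun y ⟨⟨hy, ⟨q', hq'P, hq'⟩, _⟩, hyw⟩ => ⟨hyw, ?_⟩
        have hxy : |x₀ - y| ≤ ρ := by
          rw [abs_le]; constructor <;> linarith [hx₀w.1, hx₀w.2, hyw.1, hyw.2]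
        obtain rfl := eq_of_vnorm_lt_of_forall_le_vnorm hf hγ hx₀ hy hxy hrep hqP.2 hq'P.2 hq hq'
        simpa [hf₀ y hy] using (dnint_le_vnorm _ i₀).trans_lt hq'
    _ ≤ ENNReal.ofReal (2 * ψ / |(q : ℝ)|) :=
        volume_dnint_lt_inter_Icc_le hq0 (by nlinarith [hqP.2])
    _ ≤ ENNReal.ofReal (2 * ψ / P) := ENNReal.ofReal_le_ofReal (by gcongr; exact hqP.1)

lemma volume_shellSet_le (i₀ : Fin n) (hf : LipschitzOnWith K f (Icc a b))
    (hf₀ : ∀ x ∈ Icc a b, f x i₀ = x) {P ψ γ : ℝ} (hP : 1 ≤ P) (hψ : 0 < ψ) (hψγ : 4 * ψ ≤ γ)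
    (hγ : γ ≤ 1) :
    volume (shellSet f θ a b P ψ γ) ≤ ENNReal.ofReal ((8 * (b - a) * (K + 1) / γ + 2) * ψ) := by
  have hγ0 : 0 < γ := by linarith
  set ρ := γ / (4 * P * (K + 1)) with hρdef
  have hρ : 0 < ρ := by positivity
  have h2Pρ : 2 * P * ρ = γ / (2 * (K + 1)) := by rw [hρdef]; field_simp; ring
  have h2PKρ : 2 * P * K * ρ ≤ γ / 2 := by
    rw [mul_right_comm, h2Pρ, div_mul_eq_mul_div, div_le_div_iff₀ (by positivity) two_pos]
    nlinarith
  have hγ2 : γ / (2 * (K + 1)) ≤ γ / 2 := by gcongr; linarith [K.coe_nonneg]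
  calc volume (shellSet f θ a b P ψ γ)
      ≤ ENNReal.ofReal ((b - a) / ρ + 1) * ENNReal.ofReal (2 * ψ / P) :=
        volume_le_of_volume_inter_Icc_le (fun x hx => hx.1) hρ
          (volume_shellSet_inter_Icc_le i₀ hf hf₀ (by linarith) (by linarith) (by linarith) hρ.le)
    _ = ENNReal.ofReal (8 * (b - a) * (K + 1) / γ * ψ + 2 * ψ / P) := by
        rw [← ENNReal.ofReal_mul' (by positivity)]
        congr 1
        rw [hρdef]
        field_simp
        ring
    _ ≤ ENNReal.ofReal ((8 * (b - a) * (K + 1) / γ + 2) * ψ) := by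
        gcongr
        rw [add_mul]
        gcongr
        exact div_le_self (by positivity) hP

lemma frequently_mem_shellSet {x : ℝ} (hx : x ∈ Icc a b) {e₁ e₂ κ : ℝ}
    (hinf : (approxSet (f x) θ e₁).Infinite) (hbad : IsBadlyApprox κ e₂ (f x)) (he₁ : e₁ ≤ 0)
    (he₂ : e₂ ≤ 0) (hκ : 0 ≤ κ) :
    ∃ᶠ t : ℕ in atTop, x ∈ shellSet f θ a b (2 ^ t) ((2 ^ t) ^ e₁) (κ * (4 * 2 ^ t) ^ e₂) := by
  refine hinf.frequently_exists_abs_mem_Ico_two_pow.mono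
    fun t ⟨q, ⟨_, hq⟩, hqt⟩ => ⟨hx, ⟨q, hqt, hq.trans_le ?_⟩, fun d hd hd4 => ?_⟩
  · exact Real.rpow_le_rpow_of_nonpos (by positivity) hqt.1 he₁
  · refine (mul_le_mul_of_nonneg_left ?_ hκ).trans (hbad d hd)
    exact Real.rpow_le_rpow_of_nonpos (abs_pos.2 (Int.cast_ne_zero.2 hd)) hd4.le he₂

lemma volume_setOf_frequently_mem_shellSet (i₀ : Fin n) (hf : LipschitzOnWith K f (Icc a b))
    (hf₀ : ∀ x ∈ Icc a b, f x i₀ = x) {e₁ e₂ κ : ℝ} (he : e₁ < e₂) (he₂ : e₂ ≤ 0)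
    (hκ : 0 < κ) (hκ1 : κ ≤ 1) :
    volume {x | ∃ᶠ t : ℕ in atTop,
      x ∈ shellSet f θ a b (2 ^ t) ((2 ^ t) ^ e₁) (κ * (4 * 2 ^ t) ^ e₂)} = 0 := by
  set r : ℝ := 2 ^ (e₁ - e₂)
  set u : ℝ := 2 ^ e₂
  set c := κ * 4 ^ e₂
  have hr : r < 1 := Real.rpow_lt_one_of_one_lt_of_neg one_lt_two (by linarith)
  have hru : r * u < 1 := by
    rw [← Real.rpow_add two_pos, sub_add_cancel]
    exact Real.rpow_lt_one_of_one_lt_of_neg one_lt_two (by linarith)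
  have hψ (t : ℕ) : ((2 : ℝ) ^ t) ^ e₁ = r ^ t * u ^ t := by
    rw [← mul_pow, ← Real.rpow_add two_pos, sub_add_cancel, Real.rpow_pow_comm zero_le_two]
  have hγ (t : ℕ) : κ * (4 * 2 ^ t : ℝ) ^ e₂ = c * u ^ t := by
    rw [Real.mul_rpow (by norm_num) (by positivity), Real.rpow_pow_comm zero_le_two, mul_assoc]
  have hlim : Tendsto (fun t : ℕ => r ^ t) atTop (𝓝 0) :=
    tendsto_pow_atTop_nhds_zero_of_lt_one (by positivity) hr
  refine measure_setOf_frequently_mem_eq_zero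
    (B := fun t => 8 * (b - a) * (K + 1) / c * r ^ t + 2 * (r * u) ^ t) ?_ ?_
  · exact ((summable_geometric_of_lt_one (by positivity) hr).mul_left _).add
      ((summable_geometric_of_lt_one (by positivity) hru).mul_left _)
  filter_upwards [hlim.eventually (ge_mem_nhds (show 0 < c / 4 by positivity))] with t ht
  refine (volume_shellSet_le i₀ hf hf₀ (one_le_pow₀ one_le_two) (by positivity) ?_ ?_).trans_eq ?_
  · rw [hψ, hγ]
    nlinarith [pow_pos (show (0 : ℝ) < u by positivity) t]
  · have h4 : (1 : ℝ) ≤ 4 * 2 ^ t := by nlinarith [one_le_pow₀ (M₀ := ℝ) one_le_two (n := t)]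
    exact mul_le_one₀ hκ1 (by positivity) (Real.rpow_le_one_of_one_le_of_nonpos h4 he₂)
  · rw [hψ, hγ, mul_pow]
    congr 1
    have : u ^ t ≠ 0 := by positivity
    field_simp

theorem volume_setOf_approxSet_infinite_eq_zero (i₀ : Fin n) (hf : LipschitzOnWith K f (Icc a b))
    (hf₀ : ∀ x ∈ Icc a b, f x i₀ = x) {e₁ e₂ : ℝ} (he : e₁ < e₂) (he₂ : e₂ ≤ 0)
    (hhom : volume {x ∈ Icc a b | (approxSet (f x) 0 e₂).Infinite} = 0) (θ : Fin n → ℝ) :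
    volume {x ∈ Icc a b | (approxSet (f x) θ e₁).Infinite} = 0 := by
  refine measure_mono_null (t := {x ∈ Icc a b | (approxSet (f x) 0 e₂).Infinite} ∪
      range ((↑) : ℚ → ℝ) ∪ ⋃ j : ℕ, {x | ∃ᶠ t : ℕ in atTop,
        x ∈ shellSet f θ a b (2 ^ t) ((2 ^ t) ^ e₁) (1 / ((j : ℝ) + 1) * (4 * 2 ^ t) ^ e₂)})
    ?_ (measure_union_null (measure_union_null hhom ((countable_range _).measure_zero _))
      (measure_iUnion_null fun j => volume_setOf_frequently_mem_shellSet i₀ hf hf₀ he he₂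
        (by positivity) (div_le_one_of_le₀ (by linarith [j.cast_nonneg (α := ℝ)]) (by positivity))))
  rintro x ⟨hx, hinf⟩
  by_cases hrat : ∃ d : ℤ, d ≠ 0 ∧ vnorm ((d : ℝ) • f x) = 0
  · obtain ⟨d, hd, h0⟩ := hrat
    have hdx : dnint (d * x) = 0 :=
      le_antisymm (by simpa [hf₀ x hx] using (dnint_le_vnorm _ i₀).trans h0.le) (abs_nonneg _)
    obtain ⟨m, hm⟩ := exists_intCast_eq_of_dnint_eq_zero hdx
    refine Or.inl (Or.inr ⟨m / d, ?_⟩)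
    push_cast
    rw [← hm]
    field_simp
  by_cases hhomx : (approxSet (f x) 0 e₂).Infinite
  · exact Or.inl (Or.inl ⟨hx, hhomx⟩)
  obtain ⟨κ, hκ, hbad⟩ := exists_isBadlyApprox_of_finite (not_infinite.1 hhomx)
    fun d hd => (vnorm_nonneg _).lt_of_ne' fun h => hrat ⟨d, hd, h⟩
  obtain ⟨j, hj⟩ := exists_nat_one_div_lt hκ
  exact Or.inr (mem_iUnion.2 ⟨j, frequently_mem_shellSet hx hinf (hbad.mono hj.le) (by linarith)
    he₂ (by positivity)⟩)

end Shells

theorem extremal_curve_implies_SIE_general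
    (n : ℕ) (hn : 0 < n) (a b : ℝ)
    (f f' : ℝ → Fin n → ℝ)
    (hderiv : ∀ x ∈ Icc a b, HasDerivAt f (f' x) x)
    (hf1 : ∀ x ∈ Icc a b, f x ⟨0, hn⟩ = x)
    (C : ℝ) (hC : ∀ x ∈ Icc a b, (⨆ i, |f' x i|) ≤ C)
    (hext : ∀ ε : ℝ, 0 < ε →
      volume {x ∈ Icc a b | {q : ℤ | q ≠ 0 ∧
        vnorm (fun i => (q : ℝ) * f x i)
          < |(q : ℝ)| ^ (-(1 / (n : ℝ)) - ε)}.Infinite} = 0) :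
    ∀ (θ : Fin n → ℝ) (ε : ℝ), 0 < ε →
      volume {x ∈ Icc a b | {q : ℤ | q ≠ 0 ∧
        vnorm (fun i => (q : ℝ) * f x i + θ i)
          < |(q : ℝ)| ^ (-(1 / (n : ℝ)) - ε)}.Infinite} = 0 := by
  intro θ ε hε
  have hhom :
      volume {x ∈ Icc a b | (approxSet (f x) 0 (-(1 / (n : ℝ)) - ε / 2)).Infinite} = 0 := by
    simp only [approxSet, add_zero]
    exact hext (ε / 2) (half_pos hε)
  have hn_inv : 0 ≤ 1 / (n : ℝ) := by positivity
  exact volume_setOf_approxSet_infinite_eq_zero ⟨0, hn⟩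
    (lipschitzOnWith_of_iSup_abs_deriv_le (convex_Icc a b) hderiv hC) hf1 (by linarith)
    (by linarith) hhom θ

/-- Theorem 1* for curves: let `M` be the differentiable curve parameterised by
`f : I → ℝⁿ` in Monge form (`f₁(x) = x`, so `f` is a diffeomorphism onto `M`)
with `sup_I |f'|_∞ ≤ C < ∞`, and let the induced measure on `M` correspond to
Lebesgue measure on the parameter interval.  If `M` is extremal, i.e. for every
`ε > 0` the set `S_n(ε) ∩ M` is null, then for every `θ ∈ ℝⁿ` and `ε > 0` the
set `S_n^θ(ε) ∩ M` is null. -/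
theorem extremal_curve_implies_SIE
    (n : ℕ) (hn : 0 < n) (a b : ℝ) (hab : a < b)
    (f f' : ℝ → Fin n → ℝ)
    (hderiv : ∀ x ∈ Icc a b, HasDerivAt f (f' x) x)
    (hf1 : ∀ x ∈ Icc a b, f x ⟨0, hn⟩ = x)
    (C : ℝ) (hC : ∀ x ∈ Icc a b, (⨆ i, |f' x i|) ≤ C)
    (hext : ∀ ε : ℝ, 0 < ε →
      volume {x ∈ Icc a b | {q : ℤ | q ≠ 0 ∧
        vnorm (fun i => (q : ℝ) * f x i)
          < |(q : ℝ)| ^ (-(1 / (n : ℝ)) - ε)}.Infinite} = 0) :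
    ∀ (θ : Fin n → ℝ) (ε : ℝ), 0 < ε →
      volume {x ∈ Icc a b | {q : ℤ | q ≠ 0 ∧
        vnorm (fun i => (q : ℝ) * f x i + θ i)
          < |(q : ℝ)| ^ (-(1 / (n : ℝ)) - ε)}.Infinite} = 0 :=
  extremal_curve_implies_SIE_general n hn a b f f' hderiv hf1 C hC hext
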